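/- The Top Trading Cycles rule with deterministic endowments is Pareto-efficient: at every strict preference profile, no other deterministic assignment makes every agent weakly better off and some agent strictly better off than the TTC assignment. -/
import Mathlib


open Finset

/-- A strict preference over the `n` objects, given by its rank function:
`P x ≤ P y` means `x` is weakly preferred to `y` (rank `0` is best). -/
abbrev Pref (n : ℕ) := Equiv.Perm (Fin n)

/-- The top-ranked object of a preference. -/
def topOf {n : ℕ} [NeZero n] (P : Pref n) : Fin n := P.symm 0

/-- Upper contour set of object `x` at preference `P`. -/
def UC {n : ℕ} (P : Pref n) (x : Fin n) : Finset (Fin n) :=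
  Finset.univ.filter fun y => P y ≤ P x

/-- First-order stochastic dominance of lottery `l` over lottery `m` w.r.t. `P`. -/
def SDdom {n : ℕ} (P : Pref n) (l m : Fin n → ℝ) : Prop :=
  ∀ x, ∑ y ∈ UC P x, m y ≤ ∑ y ∈ UC P x, l y

/-- Strict stochastic dominance. -/
def SDstrict {n : ℕ} (P : Pref n) (l m : Fin n → ℝ) : Prop :=
  SDdom P l m ∧ ∃ x, ∑ y ∈ UC P x, m y < ∑ y ∈ UC P x, l y

/-- Point mass at `x`. -/
def delta {n : ℕ} (x : Fin n) : Fin n → ℝ := fun y => if y = x then 1 else 0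

/-- A bistochastic (doubly stochastic) matrix: a probabilistic assignment.
Row `i` is agent `i`'s lottery over objects. -/
def Bistochastic {n : ℕ} (A : Matrix (Fin n) (Fin n) ℝ) : Prop :=
  (∀ i j, 0 ≤ A i j) ∧ (∀ i, ∑ j, A i j = 1) ∧ (∀ j, ∑ i, A i j = 1)

/-- `B` SD-Pareto-dominates `A` at profile `P`. -/
def ParetoDom {n : ℕ} (P : Fin n → Pref n) (B A : Matrix (Fin n) (Fin n) ℝ) : Prop :=
  (∀ i, SDdom (P i) (B i) (A i)) ∧ ∃ i, SDstrict (P i) (B i) (A i)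

/-- `A` is SD-Pareto-efficient at `P`: no bistochastic matrix dominates it. -/
def SDEffAt {n : ℕ} (P : Fin n → Pref n) (A : Matrix (Fin n) (Fin n) ℝ) : Prop :=
  ¬ ∃ B, Bistochastic B ∧ ParetoDom P B A

/-- `A` is SD-individually rational at `P`: agent `i` (endowed with object `i`)
gets a lottery stochastically dominating the point mass at her endowment. -/
def SDIRAt {n : ℕ} (P : Fin n → Pref n) (A : Matrix (Fin n) (Fin n) ℝ) : Prop :=
  ∀ i, SDdom (P i) (A i) (delta i)

/-- The most preferred object of `P` among the objects in `S`. -/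
noncomputable def best {n : ℕ} (P : Pref n) (S : Finset (Fin n)) (hS : S.Nonempty) : Fin n :=
  P.symm ((S.image fun y => P y).min' (hS.image _))

/-- One pass of the TTC algorithm with explicit fuel: repeatedly find a cycle of the
map sending each remaining agent to the owner of her most preferred remaining object
(object `j` is owned by agent `j`), trade along the cycle, and remove its members. -/
noncomputable def TTCaux {n : ℕ} (Pr : Fin n → Pref n) : ℕ → Finset (Fin n) → Fin n → Fin n
  | 0, _ => id
  | fuel+1, S =>
    if hS : S.Nonempty then
      let f : Fin n → Fin n := fun i => if i ∈ S then best (Pr i) S hS else i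
      let c := f^[n] hS.choose
      let Cyc := ((Finset.range (n+1)).image fun k => f^[k] c) ∩ S
      fun i => if i ∈ Cyc then f i else TTCaux Pr fuel (S \ Cyc) i
    else id

/-- The Top Trading Cycles rule: `TTC Pr i` is the object assigned to agent `i`
when agent `j` is endowed with object `j`. -/
noncomputable def TTC {n : ℕ} (Pr : Fin n → Pref n) : Fin n → Fin n :=
  TTCaux Pr n Finset.univ

/-- The TTC rule viewed as a probabilistic assignment rule (a permutation matrix). -/
noncomputable def TTCmat {n : ℕ} (Pr : Fin n → Pref n) : Matrix (Fin n) (Fin n) ℝ :=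
  fun i j => if TTC Pr i = j then 1 else 0

lemma best_mem {n : ℕ} (P : Pref n) (S : Finset (Fin n)) (hS : S.Nonempty) :
    best P S hS ∈ S := by
  have h := (S.image fun y => P y).min'_mem (hS.image _)
  rw [mem_image] at h
  obtain ⟨y, hy, hEq⟩ := h
  have : best P S hS = y := by rw [best, ← hEq, Equiv.symm_apply_apply]
  rwa [this]

lemma best_le {n : ℕ} (P : Pref n) (S : Finset (Fin n)) (hS : S.Nonempty)
    {y : Fin n} (hy : y ∈ S) : P (best P S hS) ≤ P y := by
  rw [best, Equiv.apply_symm_apply]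
  exact min'_le _ _ (mem_image_of_mem _ hy)

lemma TTCaux_succ {n : ℕ} (Pr : Fin n → Pref n) (fuel : ℕ) (S : Finset (Fin n))
    (hS : S.Nonempty) (i : Fin n) :
    TTCaux Pr (fuel+1) S i =
      (let f : Fin n → Fin n := fun i => if i ∈ S then best (Pr i) S hS else i
       let c := f^[n] hS.choose
       let Cyc := ((Finset.range (n+1)).image fun k => f^[k] c) ∩ S
       if i ∈ Cyc then f i else TTCaux Pr fuel (S \ Cyc) i) := by
  rw [TTCaux, dif_pos hS]

lemma key {n : ℕ} (Pr : Fin n → Pref n) :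
    ∀ fuel (S : Finset (Fin n)), S.card ≤ fuel → ∀ g : Fin n → Fin n, Function.Injective g →
    (∀ i ∈ S, g i ∈ S) →
    (∀ i ∈ S, Pr i (g i) ≤ Pr i (TTCaux Pr fuel S i)) →
    ∀ i ∈ S, g i = TTCaux Pr fuel S i := by
  intro fuel
  induction fuel with
  | zero =>
    intro S hcard g _ _ _ i hi
    have : S = ∅ := card_eq_zero.mp (Nat.le_zero.mp hcard)
    simp [this] at hi
  | succ fuel ih =>
    intro S hcard g hginj hgS hdom i hi
    have hS : S.Nonempty := ⟨i, hi⟩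
    -- set up notation
    set f : Fin n → Fin n := fun i => if i ∈ S then best (Pr i) S hS else i with hf
    set c : Fin n := f^[n] hS.choose with hcdef
    set Cyc : Finset (Fin n) := ((Finset.range (n+1)).image fun k => f^[k] c) ∩ S with hCyc
    have hT : ∀ j, TTCaux Pr (fuel+1) S j =
        if j ∈ Cyc then f j else TTCaux Pr fuel (S \ Cyc) j := fun j =>
      TTCaux_succ Pr fuel S hS j
    have hfS : ∀ j ∈ S, f j ∈ S := by
      intro j hj; simp only [hf, if_pos hj]; exact best_mem _ _ _
    have hiter : ∀ k, ∀ x ∈ S, f^[k] x ∈ S := by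
      intro k
      induction k with
      | zero => intro x hx; simpa using hx
      | succ k ihk =>
        intro x hx
        rw [Function.iterate_succ_apply']
        exact hfS _ (ihk x hx)
    have hcS : c ∈ S := hiter n _ hS.choose_spec
    -- pigeonhole: find a period for c
    obtain ⟨a, b, hab, hEq⟩ : ∃ a b : Fin (n+1), a ≠ b ∧ f^[(a:ℕ)] hS.choose = f^[(b:ℕ)] hS.choose := by
      have hlt : Fintype.card (Fin n) < Fintype.card (Fin (n+1)) := by simp
      obtain ⟨a, b, hab, h⟩ := Fintype.exists_ne_map_eq_of_card_lt
        (fun k : Fin (n+1) => f^[(k:ℕ)] hS.choose) hlt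
      exact ⟨a, b, hab, h⟩
    -- wlog a < b
    obtain ⟨p, hp1, hpn, hper⟩ : ∃ p, 1 ≤ p ∧ p ≤ n ∧ f^[p] c = c := by
      rcases lt_or_gt_of_ne hab with h | h
      · refine ⟨(b:ℕ) - a, by omega, by have := b.isLt; omega, ?_⟩
        rw [hcdef, ← Function.iterate_add_apply]
        have h1 : (b:ℕ) - a + n = (n - a) + b := by have := b.isLt; omega
        rw [h1, Function.iterate_add_apply, ← hEq, ← Function.iterate_add_apply]
        congr 1; have := b.isLt; omega
      · refine ⟨(a:ℕ) - b, by omega, by have := a.isLt; omega, ?_⟩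
        rw [hcdef, ← Function.iterate_add_apply]
        have h1 : (a:ℕ) - b + n = (n - b) + a := by have := a.isLt; omega
        rw [h1, Function.iterate_add_apply, hEq, ← Function.iterate_add_apply]
        congr 1; have := a.isLt; omega
    have hperq : ∀ q, f^[p * q] c = c := by
      intro q
      induction q with
      | zero => simp
      | succ q ihq =>
        rw [Nat.mul_succ, Function.iterate_add_apply, hper, ihq]
    have hmod : ∀ m, f^[m] c = f^[m % p] c := by
      intro m
      conv_lhs => rw [← Nat.mod_add_div m p]
      rw [Function.iterate_add_apply, hperq]
    have hCycS : Cyc ⊆ S := inter_subset_right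
    have hmemCyc : ∀ m, f^[m] c ∈ Cyc := by
      intro m
      rw [hmod m, hCyc, mem_inter]
      have hmp : m % p < p := Nat.mod_lt _ (by omega)
      constructor
      · exact mem_image_of_mem _ (mem_range.mpr (by omega))
      · exact hiter _ _ hcS
    have hcC : c ∈ Cyc := by
      have := hmemCyc 0; simpa using this
    -- f is surjective from Cyc onto Cyc
    have hsurj : ∀ y ∈ Cyc, ∃ z ∈ Cyc, f z = y := by
      intro y hy
      rw [hCyc, mem_inter, mem_image] at hy
      obtain ⟨⟨k, _, hk⟩, _⟩ := hy
      refine ⟨f^[k + p - 1] c, hmemCyc _, ?_⟩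
      have : f (f^[k + p - 1] c) = f^[1 + (k + p - 1)] c := by
        rw [Function.iterate_add_apply]; simp
      rw [this, show 1 + (k + p - 1) = k + p by omega, Function.iterate_add_apply, hper, hk]
    -- on Cyc, g = f = TTCaux
    have hgCyc : ∀ j ∈ Cyc, g j = f j := by
      intro j hj
      have hjS : j ∈ S := hCycS hj
      have h1 : Pr j (g j) ≤ Pr j (f j) := by
        have := hdom j hjS
        rwa [hT j, if_pos hj] at this
      have h2 : Pr j (f j) ≤ Pr j (g j) := by
        simp only [hf, if_pos hjS]
        exact best_le _ _ _ (hgS j hjS)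
      exact (Pr j).injective (le_antisymm h1 h2)
    -- g maps S \ Cyc into S \ Cyc
    have hgS' : ∀ j ∈ S \ Cyc, g j ∈ S \ Cyc := by
      intro j hj
      rw [mem_sdiff] at hj ⊢
      refine ⟨hgS j hj.1, fun hgC => ?_⟩
      obtain ⟨z, hz, hfz⟩ := hsurj _ hgC
      have : g z = g j := by rw [hgCyc z hz, hfz]
      exact hj.2 (hginj this ▸ hz)
    -- card bound
    have hcard' : (S \ Cyc).card ≤ fuel := by
      have h1 := card_sdiff_of_subset hCycS
      have h2 : 1 ≤ Cyc.card := card_pos.mpr ⟨c, hcC⟩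
      omega
    have hdom' : ∀ j ∈ S \ Cyc, Pr j (g j) ≤ Pr j (TTCaux Pr fuel (S \ Cyc) j) := by
      intro j hj
      rw [mem_sdiff] at hj
      have := hdom j hj.1
      rwa [hT j, if_neg hj.2] at this
    have hrest := ih (S \ Cyc) hcard' g hginj hgS' hdom'
    rw [hT i]
    by_cases hiC : i ∈ Cyc
    · rw [if_pos hiC]; exact hgCyc i hiC
    · rw [if_neg hiC]; exact hrest i (mem_sdiff.mpr ⟨hi, hiC⟩)

theorem stmt8 {n : ℕ} (Pr : Fin n → Pref n) :
    ¬ ∃ g : Fin n → Fin n, Function.Bijective g ∧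
      (∀ i, Pr i (g i) ≤ Pr i (TTC Pr i)) ∧ (∃ i, Pr i (g i) < Pr i (TTC Pr i)) := by
  rintro ⟨g, hgbij, hweak, i0, hstrict⟩
  have hall : ∀ i ∈ (Finset.univ : Finset (Fin n)), g i = TTCaux Pr n Finset.univ i :=
    key Pr n Finset.univ (by simp) g hgbij.injective (by simp) (fun i _ => hweak i)
  have h := hall i0 (Finset.mem_univ i0)
  have hTT : TTC Pr i0 = TTCaux Pr n Finset.univ i0 := rfl
  rw [hTT, ← h] at hstrict
  exact lt_irrefl _ hstrict
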